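/- arXiv:2304.01777 — 4 statements merged into one kernel-verified Lean document; each statement's English description precedes it below -/
import Mathlib

section
/- Let p be a prime and let A = {a_1, ..., a_k} be a set of k distinct non-zero residue classes modulo p. If k > 2√p, then every element of Z_p can be written as a sum of distinct elements of A (equivalently, the set of subset sums FS(A) equals Z_p). -/
open Finset

namespace OlsonAux

variable {F : Type*} [Field F] [DecidableEq F]

/-- Lagrange weight at a node. -/
noncomputable def w (S : Finset F) (x : F) : F := ∏ y ∈ S.erase x, (x - y)⁻¹

lemma coeff_basis_top (S : Finset F) (x : F) (hx : x ∈ S) :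
    (Lagrange.basis S id x).coeff (S.card - 1) = w S x := by
  have hinj : Set.InjOn (id : F → F) S := Function.injective_id.injOn
  have hdeg : (Lagrange.basis S id x).natDegree = S.card - 1 :=
    Lagrange.natDegree_basis hinj hx
  rw [← hdeg]
  show (Lagrange.basis S id x).leadingCoeff = w S x
  unfold Lagrange.basis
  rw [Polynomial.leadingCoeff_prod]
  refine Finset.prod_congr rfl fun y hy => ?_
  have hxy : (id x : F) ≠ id y := fun h => (Finset.mem_erase.mp hy).1 (by simpa using h.symm)
  rw [Lagrange.basisDivisor, Polynomial.leadingCoeff_mul, Polynomial.leadingCoeff_C,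
    (Polynomial.monic_X_sub_C (id y)).leadingCoeff, mul_one]
  rfl

/-- One-variable key: sum of `x^d` against Lagrange weights picks out the top coefficient. -/
lemma sum_pow_mul_w (S : Finset F) (hS : S.Nonempty) {d : ℕ} (hd : d ≤ S.card - 1) :
    ∑ x ∈ S, x ^ d * w S x = if d = S.card - 1 then 1 else 0 := by
  have hinj : Set.InjOn (id : F → F) S := Function.injective_id.injOn
  have hcard : 1 ≤ S.card := hS.card_pos
  have hdeg : ((Polynomial.X : Polynomial F) ^ d).degree < S.card := by
    rw [Polynomial.degree_X_pow]
    exact_mod_cast Nat.lt_of_le_of_lt hd (by omega)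
  have h1 := Lagrange.eq_interpolate hinj hdeg
  have h2 := congrArg (fun q : Polynomial F => q.coeff (S.card - 1)) h1
  simp only [Lagrange.interpolate_apply, Polynomial.finset_sum_coeff,
    Polynomial.coeff_C_mul, Polynomial.coeff_X_pow, Polynomial.eval_pow,
    Polynomial.eval_X, id] at h2
  rw [eq_comm, show (if d = S.card - 1 then (1:F) else 0) = (if S.card - 1 = d then (1:F) else 0) by
      simp [eq_comm], h2]
  refine Finset.sum_congr rfl fun x hx => ?_
  rw [coeff_basis_top S x hx]


open MvPolynomial in
/-- Multivariate key formula: summing `f` against product Lagrange weights over the grid `S^h`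
extracts the coefficient of the top-corner monomial, provided the total degree is small. -/
lemma grid_sum_eq_coeff (S : Finset F) (hS : S.Nonempty) (h : ℕ)
    (f : MvPolynomial (Fin h) F) (hdeg : f.totalDegree ≤ h * (S.card - 1)) :
    ∑ s ∈ Fintype.piFinset (fun _ : Fin h => S), eval s f * ∏ i, w S (s i)
      = coeff (Finsupp.equivFunOnFinite.symm fun _ => S.card - 1) f := by
  classical
  set N := S.card - 1 with hN
  conv_lhs => rw [f.as_sum]
  simp only [eval_sum, Finset.sum_mul, eval_monomial]
  rw [Finset.sum_comm]
  have key : ∀ m ∈ f.support,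
      ∑ s ∈ Fintype.piFinset (fun _ : Fin h => S),
        (coeff m f * m.prod fun n e => s n ^ e) * ∏ i, w S (s i)
      = coeff m f * (if m = Finsupp.equivFunOnFinite.symm fun _ => N then 1 else 0) := by
    intro m hm
    have hprod : ∀ s : Fin h → F, (m.prod fun n e => s n ^ e) = ∏ i, s i ^ m i := by
      intro s
      exact Finsupp.prod_fintype _ _ (fun i => pow_zero (s i))
    simp only [hprod]
    have : ∀ s : Fin h → F, coeff m f * (∏ i, s i ^ m i) * ∏ i, w S (s i)
        = coeff m f * ∏ i, (s i ^ m i * w S (s i)) := by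
      intro s; rw [Finset.prod_mul_distrib]; ring
    simp only [this, ← Finset.mul_sum]
    congr 1
    rw [← Finset.prod_univ_sum (fun _ : Fin h => S) (fun i x => x ^ m i * w S x)]
    by_cases hcase : m = Finsupp.equivFunOnFinite.symm fun _ => N
    · subst hcase
      simp only [if_true]
      refine Finset.prod_eq_one fun i _ => ?_
      have : (Finsupp.equivFunOnFinite.symm fun _ : Fin h => N) i = N := rfl
      rw [this, sum_pow_mul_w S hS le_rfl, if_pos rfl]
    · rw [if_neg hcase]
      -- some coordinate of m is < N
      have hlow : ∃ i, m i < N := by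
        by_contra hcon
        push_neg at hcon
        -- all coordinates ≥ N; if all equal N contradiction with hcase, else sum too big
        have hsum : ∑ i, m i ≤ f.totalDegree := by
          have := MvPolynomial.le_totalDegree hm
          rw [Finsupp.sum_fintype] at this
          · exact this
          · intro _; rfl
        have hne : ∃ i, N < m i := by
          by_contra hcon2
          push_neg at hcon2
          apply hcase
          ext i
          exact le_antisymm (hcon2 i) (hcon i)
        obtain ⟨i0, hi0⟩ := hne
        have : h * N < ∑ i, m i := by
          calc h * N = ∑ _i : Fin h, N := by simp [Finset.sum_const, Finset.card_univ, mul_comm]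
          _ < ∑ i, m i := by
              apply Finset.sum_lt_sum (fun i _ => hcon i) ⟨i0, Finset.mem_univ i0, hi0⟩
        omega
      obtain ⟨i, hi⟩ := hlow
      refine Finset.prod_eq_zero (Finset.mem_univ i) ?_
      rw [sum_pow_mul_w S hS (le_of_lt hi), if_neg (Nat.ne_of_lt hi)]
  rw [Finset.sum_congr rfl key]
  simp only [mul_ite, mul_one, mul_zero, Finset.sum_ite_eq' f.support]
  split_ifs with hmem
  · rfl
  · exact (MvPolynomial.notMem_support_iff.mp hmem).symm


lemma sum_min_staircase (K D : ℕ) : ∀ h : ℕ, ∑ i ∈ Finset.range h, min K (D - K*i) = min D (K*h)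
  | 0 => by simp
  | (h+1) => by
    rw [Finset.sum_range_succ, sum_min_staircase K D h]
    have : K*(h+1) = K*h + K := by ring
    omega

open MvPolynomial in
lemma prod_X_pow_eq (R : Type*) [CommSemiring R] (h : ℕ) (e : Fin h → ℕ) :
    ∏ j, (X j : MvPolynomial (Fin h) R) ^ e j
      = monomial (Finsupp.equivFunOnFinite.symm e) 1 := by
  classical
  rw [← MvPolynomial.prod_X_pow_eq_monomial]
  rw [← Finset.prod_subset (Finset.subset_univ (Finsupp.equivFunOnFinite.symm e).support)]
  · rfl
  · intro x _ hx
    have : e x = 0 := by simpa [Finsupp.mem_support_iff] using hx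
    simp [this]

open MvPolynomial in
lemma vandermonde_X_expand (R : Type*) [CommRing R] (h : ℕ) :
    ∏ i : Fin h, ∏ j ∈ Finset.Ioi i, ((X j : MvPolynomial (Fin h) R) - X i)
      = ∑ σ : Equiv.Perm (Fin h),
          (((Equiv.Perm.sign σ : ℤ) : MvPolynomial (Fin h) R)) *
            monomial (Finsupp.equivFunOnFinite.symm fun j => ((σ j : ℕ))) 1 := by
  classical
  have h1 : ∏ i : Fin h, ∏ j ∈ Finset.Ioi i, ((X j : MvPolynomial (Fin h) R) - X i)
      = (Matrix.vandermonde fun i => (X i : MvPolynomial (Fin h) R)).det :=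
    (Matrix.det_vandermonde _).symm
  rw [h1, Matrix.det_apply']
  rw [← Equiv.sum_comp (Equiv.inv (Equiv.Perm (Fin h)))]
  refine Finset.sum_congr rfl fun σ _ => ?_
  simp only [Equiv.inv_apply, Equiv.Perm.sign_inv]
  congr 1
  calc ∏ x : Fin h, Matrix.vandermonde (fun i => (X i : MvPolynomial (Fin h) R)) (σ⁻¹ x) x
      = ∏ x : Fin h, (X (σ⁻¹ x) : MvPolynomial (Fin h) R) ^ (x : ℕ) := rfl
    _ = ∏ j : Fin h, (X (σ⁻¹ (σ j)) : MvPolynomial (Fin h) R) ^ ((σ j : Fin h) : ℕ) :=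
        (Equiv.prod_comp σ (fun x => (X (σ⁻¹ x) : MvPolynomial (Fin h) R) ^ (x : ℕ))).symm
    _ = ∏ j : Fin h, (X j : MvPolynomial (Fin h) R) ^ ((σ j : Fin h) : ℕ) := by
        refine Finset.prod_congr rfl fun j _ => ?_
        rw [show σ⁻¹ (σ j) = j from σ.symm_apply_apply j]
    _ = monomial (Finsupp.equivFunOnFinite.symm fun j => ((σ j : ℕ))) 1 := prod_X_pow_eq R h _

omit [DecidableEq F] in
open MvPolynomial in
lemma coeff_sum_pow (h N : ℕ) (d : Fin h →₀ ℕ) (hd : ∑ i, d i = N) :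
    coeff d ((∑ i, (X i : MvPolynomial (Fin h) F)) ^ N)
      = (Nat.multinomial Finset.univ ⇑d : F) := by
  classical
  rw [Finset.sum_pow_eq_sum_piAntidiag]
  rw [MvPolynomial.coeff_sum]
  have : ∀ k ∈ Finset.piAntidiag Finset.univ N,
      coeff d ((Nat.multinomial Finset.univ k : MvPolynomial (Fin h) F) *
        ∏ i, (X i : MvPolynomial (Fin h) F) ^ k i)
      = if k = ⇑d then (Nat.multinomial Finset.univ ⇑d : F) else 0 := by
    intro k _
    rw [prod_X_pow_eq, ← MvPolynomial.C_eq_coe_nat, MvPolynomial.coeff_C_mul,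
      MvPolynomial.coeff_monomial]
    have hiff : (Finsupp.equivFunOnFinite.symm k = d) ↔ (k = ⇑d) := by
      constructor
      · intro hh; rw [← hh]; rfl
      · intro hh; rw [hh]; simp
    split_ifs with h1 h2 h3
    · rw [h2, mul_one]
    · exact absurd (hiff.mp h1) h2
    · exact absurd (hiff.mpr h3) h1
    · exact mul_zero _
  rw [Finset.sum_congr rfl this, Finset.sum_ite_eq' _ ⇑d]
  rw [if_pos]
  rw [Finset.mem_piAntidiag]
  exact ⟨hd, fun i _ => Finset.mem_univ i⟩


lemma eval_prod_X_sub_C_nat (n : ℕ) : ∀ j : ℕ,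
    (∏ l ∈ Finset.range j, ((Polynomial.X : Polynomial ℤ) - Polynomial.C (l:ℤ))).eval (n:ℤ)
      = (n.descFactorial j : ℤ)
  | 0 => by simp
  | (j+1) => by
    rw [Finset.prod_range_succ, Polynomial.eval_mul, eval_prod_X_sub_C_nat n j,
      Nat.descFactorial_succ]
    simp only [Polynomial.eval_sub, Polynomial.eval_X, Polynomial.eval_C]
    rcases le_or_gt j n with hle | hlt
    · push_cast [Nat.cast_sub hle]; ring
    · rw [Nat.descFactorial_eq_zero_iff_lt.mpr hlt]
      simp

lemma nat_factorial_identity (h : ℕ) (t e : Fin h → ℕ) (N : ℕ)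
    (hsum : (∀ j, e j ≤ t j) → ∑ j, (t j - e j) = N) :
    (if ∀ j, e j ≤ t j then Nat.multinomial Finset.univ (fun j => t j - e j) else 0)
        * ∏ j, (t j).factorial
      = N.factorial * ∏ j, (t j).descFactorial (e j) := by
  split_ifs with hle
  · have h1 : ∀ j : Fin h, (t j).factorial
        = (t j).descFactorial (e j) * (t j - e j).factorial := by
      intro j
      rw [← Nat.factorial_mul_descFactorial (hle j), Nat.mul_comm]
    calc Nat.multinomial Finset.univ (fun j => t j - e j) * ∏ j, (t j).factorial
        = Nat.multinomial Finset.univ (fun j => t j - e j) *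
            ((∏ j, (t j).descFactorial (e j)) * ∏ j, (t j - e j).factorial) := by
          rw [← Finset.prod_mul_distrib]
          congr 1
          exact Finset.prod_congr rfl fun j _ => h1 j
      _ = (∏ j, (t j).descFactorial (e j)) *
            ((∏ j, (t j - e j).factorial) * Nat.multinomial Finset.univ (fun j => t j - e j)) := by
          ring
      _ = N.factorial * ∏ j, (t j).descFactorial (e j) := by
          rw [Nat.multinomial_spec, hsum hle, Nat.mul_comm]
  · push_neg at hle
    obtain ⟨j0, hj0⟩ := hle
    rw [Nat.zero_mul, Finset.prod_eq_zero (Finset.mem_univ j0)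
      (Nat.descFactorial_eq_zero_iff_lt.mpr hj0), Nat.mul_zero]

open MvPolynomial in
lemma prod_sub_C_sub_pow {h' : ℕ} (SP : MvPolynomial (Fin h') F) (hSP : SP.totalDegree ≤ 1) :
    ∀ s : Finset F, (∏ e ∈ s, (SP - C e) - SP ^ s.card).totalDegree ≤ s.card - 1 := by
  classical
  intro s
  induction s using Finset.induction_on with
  | empty => simp
  | @insert a s ha ih =>
    rcases Finset.eq_empty_or_nonempty s with rfl | hne
    · have heq : ∏ e ∈ insert a (∅ : Finset F), (SP - C e) - SP ^ (insert a (∅:Finset F)).card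
          = - C a := by
        simp [pow_one]
      rw [heq]
      simp [MvPolynomial.totalDegree_neg]
    · have hcard : 1 ≤ s.card := hne.card_pos
      set r := ∏ e ∈ s, (SP - C e) - SP ^ s.card with hr
      have hprod : ∏ e ∈ s, (SP - C e) = SP ^ s.card + r := by rw [hr]; ring
      have hexpand : ∏ e ∈ insert a s, (SP - C e) - SP ^ (insert a s).card
          = SP * r - C a * SP ^ s.card - C a * r := by
        rw [Finset.prod_insert ha, hprod, Finset.card_insert_of_notMem ha]
        ring
      rw [hexpand]
      have hb1 : (SP * r).totalDegree ≤ s.card := by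
        refine le_trans (MvPolynomial.totalDegree_mul _ _) ?_
        have := ih
        omega
      have hb2 : (C a * SP ^ s.card : MvPolynomial (Fin h') F).totalDegree ≤ s.card := by
        refine le_trans (MvPolynomial.totalDegree_mul _ _) ?_
        have h3 := MvPolynomial.totalDegree_pow SP s.card
        have h4 := MvPolynomial.totalDegree_C (R := F) (σ := Fin h') a
        have h5 : s.card * SP.totalDegree ≤ s.card := by
          calc s.card * SP.totalDegree ≤ s.card * 1 := Nat.mul_le_mul_left _ hSP
          _ = s.card := mul_one _
        omega
      have hb3 : (C a * r : MvPolynomial (Fin h') F).totalDegree ≤ s.card := by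
        refine le_trans (MvPolynomial.totalDegree_mul _ _) ?_
        have h4 := MvPolynomial.totalDegree_C (R := F) (σ := Fin h') a
        have := ih
        omega
      have goal1 : (SP * r - C a * SP ^ s.card).totalDegree ≤ s.card := by
        rw [sub_eq_add_neg]
        refine le_trans (MvPolynomial.totalDegree_add _ _) ?_
        rw [MvPolynomial.totalDegree_neg]
        omega
      rw [sub_eq_add_neg]
      refine le_trans (MvPolynomial.totalDegree_add _ _) ?_
      rw [MvPolynomial.totalDegree_neg]
      rw [Finset.card_insert_of_notMem ha]
      omega

end OlsonAux

open Finset MvPolynomial OlsonAux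

/-- Olson's theorem: if `A` is a set of more than `2√p` distinct nonzero residues
modulo a prime `p`, then every element of `ℤ/pℤ` is a subset sum of `A`. -/
theorem olson_subset_sums (p : ℕ) (hp : p.Prime) (A : Finset (ZMod p))
    (h0 : (0 : ZMod p) ∉ A) (hcard : (A.card : ℝ) > 2 * Real.sqrt p) :
    ∀ v : ZMod p, ∃ B ⊆ A, ∑ a ∈ B, a = v := by
  classical
  haveI : Fact p.Prime := ⟨hp⟩
  intro v
  by_contra hcon
  push_neg at hcon
  set k := A.card with hk
  have hp2 : 2 ≤ p := hp.two_le
  have hk2 : 4 * p < k * k := by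
    have h1 : (0:ℝ) ≤ Real.sqrt p := Real.sqrt_nonneg _
    have h2 : Real.sqrt p * Real.sqrt p = p := Real.mul_self_sqrt (by positivity)
    have h3 : (4 * p : ℝ) < (k:ℝ)*(k:ℝ) := by nlinarith [hcard]
    exact_mod_cast h3
  have hk3 : 3 ≤ k := by nlinarith
  have hkp : k ≤ p - 1 := by
    have hsub : A ⊆ Finset.univ.erase 0 :=
      fun x hx => Finset.mem_erase.mpr ⟨fun h => h0 (h ▸ hx), Finset.mem_univ x⟩
    have := Finset.card_le_card hsub
    rwa [Finset.card_erase_of_mem (Finset.mem_univ 0), Finset.card_univ, ZMod.card] at this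
  set hh := k / 2 with hhh
  have hh1 : 1 ≤ hh := by omega
  set K := k - hh with hKdef
  have hK1 : 1 ≤ K := by omega
  have hhK : p ≤ hh * K := by
    rcases Nat.even_or_odd k with ⟨m, hm⟩ | ⟨m, hm⟩
    · have h5 : hh = m := by omega
      have h6 : K = m := by omega
      rw [h5, h6]; nlinarith
    · have h5 : hh = m := by omega
      have h6 : K = m + 1 := by omega
      rw [h5, h6]; nlinarith
  set D := p - 1 with hDdef
  set E := ∑ i ∈ Finset.range hh, i with hEdef
  -- the exponent sequence
  set t : Fin hh → ℕ := fun i => (hh - 1 - (i:ℕ)) + min K (D - K * (i:ℕ)) with htdef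
  have ht_le : ∀ i, t i ≤ k - 1 := by
    intro i
    have h5 : min K (D - K * (i:ℕ)) ≤ K := min_le_left _ _
    have h6 : (hh - 1 - (i:ℕ)) ≤ hh - 1 := by omega
    simp only [htdef]
    omega
  have ht_anti : ∀ i j : Fin hh, i < j → t j < t i := by
    intro i j hij
    have hj : (j:ℕ) ≤ hh - 1 := by omega
    have hij' : (i:ℕ) < (j:ℕ) := hij
    have h5 : min K (D - K * (j:ℕ)) ≤ min K (D - K * (i:ℕ)) := by
      exact min_le_min le_rfl (Nat.sub_le_sub_left (Nat.mul_le_mul_left K (le_of_lt hij')) D)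
    simp only [htdef]
    omega
  have ht_sum : ∑ i, t i = E + D := by
    rw [htdef]
    rw [Fin.sum_univ_eq_sum_range (fun i => hh - 1 - i + min K (D - K * i)) hh]
    rw [Finset.sum_add_distrib]
    have h5 : ∑ i ∈ Finset.range hh, (hh - 1 - i) = E := by
      rw [hEdef]
      exact Finset.sum_range_reflect (fun i => i) hh
    have h6 : ∑ i ∈ Finset.range hh, min K (D - K * i) = D := by
      rw [sum_min_staircase K D hh]
      have h7 : hh * K = K * hh := Nat.mul_comm _ _
      omega
    omega
  -- polynomial setup
  set SP : MvPolynomial (Fin hh) (ZMod p) := ∑ i, X i with hSPdef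
  set V : MvPolynomial (Fin hh) (ZMod p) :=
    ∏ i : Fin hh, ∏ j ∈ Finset.Ioi i, (X j - X i) with hVdef
  set g : MvPolynomial (Fin hh) (ZMod p) :=
    ∏ e ∈ Finset.univ.erase v, (SP - C e) with hgdef
  set tF : Fin hh →₀ ℕ := Finsupp.equivFunOnFinite.symm t with htFdef
  set m0 : Fin hh → ℕ := fun i => k - 1 - t i with hm0def
  set m0F : Fin hh →₀ ℕ := Finsupp.equivFunOnFinite.symm m0 with hm0Fdef
  set NF : Fin hh →₀ ℕ := Finsupp.equivFunOnFinite.symm (fun _ => k - 1) with hNFdef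
  have hNcard : (Finset.univ.erase v).card = D := by
    rw [Finset.card_erase_of_mem (Finset.mem_univ v), Finset.card_univ, ZMod.card]
  have hSPdeg : SP.totalDegree ≤ 1 := by
    rw [hSPdef]
    refine le_trans (MvPolynomial.totalDegree_finset_sum _ _) ?_
    refine Finset.sup_le fun i _ => ?_
    rw [MvPolynomial.totalDegree_X]
  have hXXdeg : ∀ i j : Fin hh,
      ((X j - X i : MvPolynomial (Fin hh) (ZMod p))).totalDegree ≤ 1 := by
    intro i j
    rw [sub_eq_add_neg]
    refine le_trans (MvPolynomial.totalDegree_add _ _) ?_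
    rw [MvPolynomial.totalDegree_neg, MvPolynomial.totalDegree_X, MvPolynomial.totalDegree_X]
    exact le_refl _
  have hVdeg : V.totalDegree ≤ E := by
    rw [hVdef]
    refine le_trans (MvPolynomial.totalDegree_finset_prod _ _) ?_
    have h5 : ∀ i : Fin hh,
        (∏ j ∈ Finset.Ioi i, (X j - X i : MvPolynomial (Fin hh) (ZMod p))).totalDegree
          ≤ hh - 1 - (i:ℕ) := by
      intro i
      refine le_trans (MvPolynomial.totalDegree_finset_prod _ _) ?_
      calc ∑ j ∈ Finset.Ioi i, ((X j - X i : MvPolynomial (Fin hh) (ZMod p))).totalDegree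
          ≤ ∑ _j ∈ Finset.Ioi i, 1 := Finset.sum_le_sum fun j _ => hXXdeg i j
        _ = (Finset.Ioi i).card := by rw [Finset.sum_const, smul_eq_mul, mul_one]
        _ = hh - 1 - (i:ℕ) := Fin.card_Ioi i
    calc ∑ i, (∏ j ∈ Finset.Ioi i, (X j - X i : MvPolynomial (Fin hh) (ZMod p))).totalDegree
        ≤ ∑ i : Fin hh, (hh - 1 - (i:ℕ)) := Finset.sum_le_sum fun i _ => h5 i
      _ = ∑ i ∈ Finset.range hh, (hh - 1 - i) := Fin.sum_univ_eq_sum_range _ hh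
      _ = E := Finset.sum_range_reflect (fun i => i) hh
  have hgdeg : g.totalDegree ≤ D := by
    rw [hgdef]
    refine le_trans (MvPolynomial.totalDegree_finset_prod _ _) ?_
    calc ∑ e ∈ Finset.univ.erase v, ((SP - C e : MvPolynomial (Fin hh) (ZMod p))).totalDegree
        ≤ ∑ _e ∈ Finset.univ.erase v, 1 := by
          refine Finset.sum_le_sum fun e _ => ?_
          rw [sub_eq_add_neg]
          refine le_trans (MvPolynomial.totalDegree_add _ _) ?_
          rw [MvPolynomial.totalDegree_neg]
          simp [hSPdeg, MvPolynomial.totalDegree_C]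
      _ = D := by rw [Finset.sum_const, smul_eq_mul, mul_one, hNcard]
  -- decompose g = SP^D + r
  set r : MvPolynomial (Fin hh) (ZMod p) := g - SP ^ D with hrdef
  have hgr : g = SP ^ D + r := by rw [hrdef]; ring
  have hrdeg : r.totalDegree ≤ D - 1 := by
    have h5 := prod_sub_C_sub_pow SP hSPdeg (Finset.univ.erase v)
    rw [hNcard] at h5
    exact h5
  have htFsupp : ∑ i ∈ tF.support, tF i = E + D := by
    rw [← ht_sum]
    refine Finset.sum_subset (Finset.subset_univ _) fun i _ hi => ?_
    exact Finsupp.notMem_support_iff.mp hi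
  have hVr : coeff tF (V * r) = 0 := by
    refine MvPolynomial.coeff_eq_zero_of_totalDegree_lt ?_
    rw [htFsupp]
    have h5 := MvPolynomial.totalDegree_mul V r
    omega
  have hsplit : coeff tF (V * g) = coeff tF (V * SP ^ D) := by
    rw [hgr, mul_add, MvPolynomial.coeff_add, hVr, add_zero]
  -- the auxiliary polynomial vanishing on the grid
  set f' : MvPolynomial (Fin hh) (ZMod p) := V * g * monomial m0F 1 with hf'def
  have hANon : A.Nonempty := Finset.card_pos.mp (by omega)
  have hm0t : ∀ i, m0 i + t i = k - 1 := fun i => by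
    have := ht_le i; simp only [hm0def]; omega
  have hm0sum : (∑ i, m0 i) + (E + D) = hh * (k - 1) := by
    rw [← ht_sum, ← Finset.sum_add_distrib]
    calc ∑ i, (m0 i + t i) = ∑ _i : Fin hh, (k-1) := Finset.sum_congr rfl fun i _ => hm0t i
      _ = hh * (k-1) := by rw [Finset.sum_const, smul_eq_mul, Finset.card_univ, Fintype.card_fin]
  have hf'deg : f'.totalDegree ≤ hh * (A.card - 1) := by
    rw [hf'def, ← hk]
    refine le_trans (MvPolynomial.totalDegree_mul _ _) ?_
    have h5 : (monomial m0F (1 : ZMod p)).totalDegree = ∑ i, m0 i := by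
      rw [MvPolynomial.totalDegree_monomial _ (one_ne_zero)]
      exact Finsupp.sum_fintype _ _ fun _ => rfl
    have h6 := MvPolynomial.totalDegree_mul V g
    rw [h5]
    omega
  have hvanish : ∀ s ∈ Fintype.piFinset (fun _ : Fin hh => A), eval s f' = 0 := by
    intro s hs
    have hsA : ∀ i, s i ∈ A := by
      intro i
      exact (Fintype.mem_piFinset.mp hs) i
    have hVg : eval s V * eval s g = 0 := by
      by_cases hinj : Function.Injective s
      · -- g vanishes
        have hBsub : Finset.image s Finset.univ ⊆ A := by
          intro x hx
          obtain ⟨i, _, rfl⟩ := Finset.mem_image.mp hx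
          exact hsA i
        have hBsum : ∑ b ∈ Finset.image s Finset.univ, b = ∑ i, s i :=
          Finset.sum_image fun i _ j _ hij => hinj hij
        have hne : ∑ i, s i ≠ v := by
          intro heq
          exact hcon _ hBsub (hBsum.trans heq)
        have hgz : eval s g = 0 := by
          rw [hgdef, MvPolynomial.eval_prod]
          refine Finset.prod_eq_zero (Finset.mem_erase.mpr ⟨hne, Finset.mem_univ _⟩) ?_
          rw [MvPolynomial.eval_sub, MvPolynomial.eval_C, hSPdef]
          simp [MvPolynomial.eval_sum]
        rw [hgz, mul_zero]
      · -- V vanishes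
        rw [Function.not_injective_iff] at hinj
        obtain ⟨a, b, hab, hne⟩ := hinj
        have hpair : ∃ a' b' : Fin hh, a' < b' ∧ s a' = s b' := by
          rcases hne.lt_or_gt with h | h
          · exact ⟨a, b, h, hab⟩
          · exact ⟨b, a, h, hab.symm⟩
        obtain ⟨a', b', hlt, heq⟩ := hpair
        have hVz : eval s V = 0 := by
          rw [hVdef, MvPolynomial.eval_prod]
          refine Finset.prod_eq_zero (Finset.mem_univ a') ?_
          rw [MvPolynomial.eval_prod]
          refine Finset.prod_eq_zero (Finset.mem_Ioi.mpr hlt) ?_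
          rw [MvPolynomial.eval_sub, MvPolynomial.eval_X, MvPolynomial.eval_X, heq, sub_self]
        rw [hVz, zero_mul]
    rw [hf'def, MvPolynomial.eval_mul, MvPolynomial.eval_mul, hVg, zero_mul]
  have hcoeffNF : coeff NF f' = 0 := by
    have h5 := grid_sum_eq_coeff A hANon hh f' hf'deg
    have h6 : ∑ s ∈ Fintype.piFinset (fun _ : Fin hh => A),
        eval s f' * ∏ i, OlsonAux.w A (s i) = 0 :=
      Finset.sum_eq_zero fun s hs => by rw [hvanish s hs, zero_mul]
    rw [h6] at h5
    rw [hNFdef]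
    exact h5.symm
  have htFeq : NF - m0F = tF := by
    rw [hNFdef, hm0Fdef, htFdef]
    ext i
    rw [Finsupp.tsub_apply]
    show (k - 1) - m0 i = t i
    have := ht_le i
    simp only [hm0def]
    omega
  have hm0le : m0F ≤ NF := by
    rw [Finsupp.le_def]
    intro i
    show m0 i ≤ k - 1
    simp only [hm0def]; omega
  have hshift : coeff NF f' = coeff tF (V * g) := by
    rw [hf'def, MvPolynomial.coeff_mul_monomial', if_pos hm0le, htFeq, mul_one]
  have hfinal0 : coeff tF (V * SP ^ D) = 0 := by
    rw [← hsplit, ← hshift, hcoeffNF]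
  -- expand the coefficient as a signed sum of multinomials
  have hEperm : ∀ σ : Equiv.Perm (Fin hh), ∑ j, ((σ j : ℕ)) = E := by
    intro σ
    rw [Equiv.sum_comp σ (fun j => ((j : Fin hh) : ℕ))]
    rw [Fin.sum_univ_eq_sum_range (fun i => i) hh]
  have hsub_sum : ∀ σ : Equiv.Perm (Fin hh), (∀ j, (σ j : ℕ) ≤ t j) →
      ∑ j, (t j - (σ j : ℕ)) = D := by
    intro σ hle
    rw [Finset.sum_tsub_distrib _ (fun j _ => hle j), ht_sum, hEperm σ]
    omega
  have hcv : coeff tF (V * SP ^ D)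
      = ∑ σ : Equiv.Perm (Fin hh), ((Equiv.Perm.sign σ : ℤ) : ZMod p) *
          (if (∀ j, (σ j : ℕ) ≤ t j)
            then (Nat.multinomial Finset.univ (fun j => t j - (σ j : ℕ)) : ZMod p) else 0) := by
    rw [hVdef, vandermonde_X_expand, Finset.sum_mul, MvPolynomial.coeff_sum]
    refine Finset.sum_congr rfl fun σ _ => ?_
    rw [mul_assoc]
    rw [← map_intCast (C : ZMod p →+* MvPolynomial (Fin hh) (ZMod p))]
    rw [MvPolynomial.coeff_C_mul]
    congr 1
    rw [MvPolynomial.coeff_monomial_mul']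
    have hle_iff : (Finsupp.equivFunOnFinite.symm fun j => ((σ j : ℕ))) ≤ tF
        ↔ ∀ j, (σ j : ℕ) ≤ t j := by
      rw [Finsupp.le_def]
      exact Iff.rfl
    split_ifs with h1 h2 h2
    · rw [one_mul]
      have hc : ⇑(tF - Finsupp.equivFunOnFinite.symm fun j => ((σ j : ℕ)))
          = fun j => t j - (σ j : ℕ) := by
        funext j
        rw [Finsupp.tsub_apply]
        rfl
      rw [coeff_sum_pow hh D _ ?hsum]
      · rw [hc]
      · calc ∑ i, (tF - Finsupp.equivFunOnFinite.symm fun j => ((σ j : ℕ))) i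
            = ∑ i, (t i - (σ i : ℕ)) :=
              Finset.sum_congr rfl fun i _ => by rw [Finsupp.tsub_apply]; rfl
          _ = D := hsub_sum σ h2
    · exact absurd (hle_iff.mp h1) h2
    · exact absurd (hle_iff.mpr h2) h1
    · rfl
  -- the integer determinant of descending factorials
  set U : ℕ := ∏ j, (t j).factorial with hUdef
  set M : Matrix (Fin hh) (Fin hh) ℤ :=
    Matrix.of (fun i j : Fin hh => ((t i).descFactorial (j : ℕ) : ℤ)) with hMdef
  have hper : ∀ σ : Equiv.Perm (Fin hh),
      (if (∀ j, (σ j : ℕ) ≤ t j)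
        then Nat.multinomial Finset.univ (fun j => t j - (σ j : ℕ)) else 0) * U
        = D.factorial * ∏ j, (t j).descFactorial ((σ j : ℕ)) := by
    intro σ
    exact nat_factorial_identity hh t (fun j => (σ j : ℕ)) D (fun hle => hsub_sum σ hle)
  have hdetM : M.det = ∏ i : Fin hh, ∏ j ∈ Finset.Ioi i, ((t j : ℤ) - (t i : ℤ)) := by
    have hdeg : ∀ j : Fin hh,
        (∏ l ∈ Finset.range (j:ℕ), ((Polynomial.X : Polynomial ℤ) - Polynomial.C (l:ℤ))).natDegree
          = (j : ℕ) := by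
      intro j
      rw [Polynomial.natDegree_prod (Finset.range (j:ℕ))
        (fun l : ℕ => (Polynomial.X : Polynomial ℤ) - Polynomial.C (l:ℤ))
        (fun l _ => Polynomial.X_sub_C_ne_zero (l:ℤ))]
      calc ∑ l ∈ Finset.range (j:ℕ), ((Polynomial.X : Polynomial ℤ) - Polynomial.C (l:ℤ)).natDegree
          = ∑ _l ∈ Finset.range (j:ℕ), 1 :=
            Finset.sum_congr rfl fun l _ => Polynomial.natDegree_X_sub_C (l:ℤ)
        _ = (j:ℕ) := by simp
    have hmonic : ∀ j : Fin hh,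
        (∏ l ∈ Finset.range (j:ℕ), ((Polynomial.X : Polynomial ℤ) - Polynomial.C (l:ℤ))).Monic :=
      fun j => Polynomial.monic_prod_of_monic _ _ fun l _ => Polynomial.monic_X_sub_C _
    have h5 := Matrix.det_eval_matrixOfPolynomials_eq_det_vandermonde
      (fun i : Fin hh => ((t i : ℤ)))
      (fun j : Fin hh => ∏ l ∈ Finset.range (j:ℕ), ((Polynomial.X : Polynomial ℤ) - Polynomial.C (l:ℤ)))
      hdeg hmonic
    have h6 : (Matrix.of fun i j : Fin hh =>
        (∏ l ∈ Finset.range (j:ℕ), ((Polynomial.X : Polynomial ℤ) - Polynomial.C (l:ℤ))).eval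
          ((t i : ℤ))) = M := by
      ext i j
      simp only [Matrix.of_apply, hMdef]
      exact eval_prod_X_sub_C_nat (t i) (j : ℕ)
    rw [h6] at h5
    rw [← h5, Matrix.det_vandermonde]
  have hbig : coeff tF (V * SP ^ D) * (U : ZMod p)
      = (((D.factorial : ℤ) * M.det : ℤ) : ZMod p) := by
    rw [hcv, Finset.sum_mul]
    have hterm : ∀ σ : Equiv.Perm (Fin hh),
        (((Equiv.Perm.sign σ : ℤ) : ZMod p) *
          (if (∀ j, (σ j : ℕ) ≤ t j)
            then (Nat.multinomial Finset.univ (fun j => t j - (σ j : ℕ)) : ZMod p) else 0))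
            * (U : ZMod p)
        = (((Equiv.Perm.sign σ : ℤ) * ((D.factorial * ∏ j, (t j).descFactorial ((σ j : ℕ)) : ℕ) : ℤ)
            : ℤ) : ZMod p) := by
      intro σ
      rw [mul_assoc]
      have h7 : ((if (∀ j, (σ j : ℕ) ≤ t j)
            then (Nat.multinomial Finset.univ (fun j => t j - (σ j : ℕ)) : ZMod p) else 0))
            * (U : ZMod p)
          = (((if (∀ j, (σ j : ℕ) ≤ t j)
            then Nat.multinomial Finset.univ (fun j => t j - (σ j : ℕ)) else 0) * U : ℕ) : ZMod p) := by
        rw [Nat.cast_mul]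
        congr 1
        split_ifs <;> simp
      rw [h7, hper σ]
      push_cast
      ring
    rw [Finset.sum_congr rfl fun σ _ => hterm σ]
    rw [← Int.cast_sum]
    congr 1
    have h8 : M.det = ∑ σ : Equiv.Perm (Fin hh),
        (Equiv.Perm.sign σ : ℤ) * ∏ i, M i (σ i) := by
      rw [← Matrix.det_transpose M, Matrix.det_apply']
      rfl
    rw [h8, Finset.mul_sum]
    refine Finset.sum_congr rfl fun σ _ => ?_
    simp only [hMdef, Matrix.of_apply]
    push_cast
    ring
  rw [hfinal0, zero_mul] at hbig
  -- contradiction: the right-hand side is nonzero mod p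
  have hfact_ne : ((D.factorial : ℤ) : ZMod p) ≠ 0 := by
    rw [Int.cast_natCast]
    rw [Ne, ZMod.natCast_eq_zero_iff]
    intro hdvd
    have := (Nat.Prime.dvd_factorial hp).mp hdvd
    omega
  have hdet_ne : ((M.det : ℤ) : ZMod p) ≠ 0 := by
    rw [hdetM]
    rw [Int.cast_prod]
    rw [Finset.prod_ne_zero_iff]
    intro i _
    rw [Int.cast_prod, Finset.prod_ne_zero_iff]
    intro j hj
    have hij : i < j := Finset.mem_Ioi.mp hj
    have hlt : t j < t i := ht_anti i j hij
    intro hzero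
    rw [ZMod.intCast_zmod_eq_zero_iff_dvd] at hzero
    have hdvd' : (p : ℤ) ∣ ((t i : ℤ) - (t j : ℤ)) := by
      have h10 := dvd_neg.mpr hzero
      rwa [neg_sub] at h10
    have hpos : (0:ℤ) < (t i : ℤ) - (t j : ℤ) := by
      have : (t j : ℤ) < (t i : ℤ) := by exact_mod_cast hlt
      omega
    have hle2 := Int.le_of_dvd hpos hdvd'
    have hti := ht_le i
    omega
  rw [eq_comm, Int.cast_mul, mul_eq_zero] at hbig
  rcases hbig with h9 | h9
  · exact hfact_ne h9
  · exact hdet_ne h9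
end

section
/- Let p be a prime such that the set of residues of powers of 2 modulo p has cardinality greater than 2√p and the set of residues of Fibonacci numbers modulo p has cardinality greater than 2√p. Then every element of Z_p × Z_p is a sum of pairwise distinct elements of the set A_1 (mod p), where A_1 = {(2^n mod p, F_m mod p) : n, m ≥ 0}; that is, FS(A_1 mod p) = Z_p^2. -/
open Finset

/-- `2n+1 ≤ 2^n` for `n ≥ 3`. -/
lemma FSaux_two_mul_add_one_le (n : ℕ) (hn : 3 ≤ n) : 2 * n + 1 ≤ 2 ^ n := by
  induction n, hn using Nat.le_induction with
  | base => norm_num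
  | succ n hn ih =>
    have h2 : (2:ℕ) ≤ 2 ^ n := by
      calc (2:ℕ) = 2 ^ 1 := rfl
      _ ≤ 2 ^ n := Nat.pow_le_pow_right (by norm_num) (by omega)
    have : 2 ^ (n+1) = 2 ^ n + 2 ^ n := by ring
    omega

/-- `b² ≤ 2^b + 1` for all `b`. -/
lemma FSaux_sq_le_pow (b : ℕ) : b ^ 2 ≤ 2 ^ b + 1 := by
  induction b with
  | zero => norm_num
  | succ n ih =>
    rcases Nat.lt_or_ge n 3 with h | h
    · interval_cases n <;> norm_num
    · have h1 := FSaux_two_mul_add_one_le n h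
      have : (n+1)^2 = n^2 + (2*n+1) := by ring
      have h2 : 2 ^ (n+1) = 2 ^ n + 2 ^ n := by ring
      omega

/-- `2k+1 ≤ fib (2k+1)` for `k ≥ 2`. -/
lemma FSaux_le_fib_odd (k : ℕ) (hk : 2 ≤ k) : 2 * k + 1 ≤ Nat.fib (2 * k + 1) := by
  induction k, hk using Nat.le_induction with
  | base => norm_num [show Nat.fib 5 = 5 by decide]
  | succ k hk ih =>
    have h1 : Nat.fib (2 * (k+1) + 1) = Nat.fib (2*k+1) + Nat.fib (2*k+2) := by
      rw [show 2 * (k+1) + 1 = (2*k+1) + 2 by ring, Nat.fib_add_two,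
        show 2*k+1+1 = 2*k+2 by ring]
    have h2 : 2 ≤ Nat.fib (2*k+2) := by
      calc (2:ℕ) = Nat.fib 3 := by decide
      _ ≤ Nat.fib (2*k+2) := Nat.fib_mono (by omega)
    omega

/-- `k² ≤ fib (2k) + 1` for all `k`. -/
lemma FSaux_sq_le_fib (k : ℕ) : k ^ 2 ≤ Nat.fib (2 * k) + 1 := by
  induction k with
  | zero => norm_num
  | succ n ih =>
    rcases Nat.lt_or_ge n 2 with h | h
    · interval_cases n <;> simp [show Nat.fib 2 = 1 by decide, show Nat.fib 4 = 3 by decide]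
    · have h1 := FSaux_le_fib_odd n h
      have h2 : Nat.fib (2 * (n+1)) = Nat.fib (2*n) + Nat.fib (2*n+1) := by
        rw [show 2 * (n+1) = (2*n) + 2 by ring, Nat.fib_add_two,
          show 2*n+1 = 2*n+1 from rfl]
      have h3 : (n+1)^2 = n^2 + (2*n+1) := by ring
      omega

/-- Binary representation: any `c < 2^s` is a sum of distinct powers of two below `2^s`. -/
lemma FSaux_binary (s : ℕ) : ∀ c < 2 ^ s, ∃ E : Finset ℕ, E ⊆ Finset.range s ∧ ∑ e ∈ E, 2 ^ e = c := by
  induction s with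
  | zero => intro c hc; interval_cases c; exact ⟨∅, by simp⟩
  | succ n ih =>
    intro c hc
    rcases Nat.lt_or_ge c (2 ^ n) with h | h
    · obtain ⟨E, hE, hsum⟩ := ih c h
      exact ⟨E, hE.trans (Finset.range_subset_range.2 (Nat.le_succ n)), hsum⟩
    · have h2 : 2 ^ (n+1) = 2 ^ n + 2 ^ n := by ring
      obtain ⟨E, hE, hsum⟩ := ih (c - 2 ^ n) (by omega)
      have hn : n ∉ E := fun hmem => by simpa using hE hmem
      refine ⟨insert n E, ?_, ?_⟩
      · intro x hx
        rcases Finset.mem_insert.1 hx with rfl | hx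
        · exact Finset.self_mem_range_succ x
        · exact Finset.range_subset_range.2 (Nat.le_succ n) (hE hx)
      · rw [Finset.sum_insert hn, hsum]; omega

/-- Zeckendorf-type representation with few terms. -/
lemma FSaux_fibrep (m : ℕ) : ∀ c < Nat.fib (m + 2), ∃ (k : ℕ) (g : ℕ → ℕ),
    k ≤ (m + 1) / 2 ∧ ∑ i ∈ Finset.range k, Nat.fib (g i) = c := by
  induction m using Nat.strong_induction_on with
  | _ m ih =>
    match m with
    | 0 =>
      intro c hc
      interval_cases c
      exact ⟨0, fun _ => 0, by norm_num, by simp⟩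
    | 1 =>
      intro c hc
      have : Nat.fib 3 = 2 := by decide
      interval_cases c
      · exact ⟨0, fun _ => 0, by norm_num, by simp⟩
      · exact ⟨1, fun _ => 1, by norm_num, by simp⟩
    | (n+2) =>
      intro c hc
      have hc4 : c < Nat.fib (n+2) + Nat.fib (n+3) := by
        have e : Nat.fib (n+2+2) = Nat.fib (n+2) + Nat.fib (n+3) := by
          rw [Nat.fib_add_two, show n+2+1 = n+3 by omega]
        omega
      have hfib3 : Nat.fib (n+3) = Nat.fib (n+1) + Nat.fib (n+2) := by
        rw [show n+3 = n+1+2 by omega, Nat.fib_add_two, show n+1+1 = n+2 by omega]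
      rcases Nat.lt_or_ge c (Nat.fib (n+2)) with h | h
      · obtain ⟨k, g, hk, hsum⟩ := ih n (by omega) c h
        exact ⟨k, g, by omega, hsum⟩
      · rcases Nat.lt_or_ge c (Nat.fib (n+3)) with h' | h'
        · have hr : c - Nat.fib (n+2) < Nat.fib (n+2) := by
            have := Nat.fib_mono (show n+1 ≤ n+2 by omega)
            omega
          obtain ⟨k, g, hk, hsum⟩ := ih n (by omega) _ hr
          refine ⟨k+1, fun i => match i with | 0 => n+2 | (j+1) => g j, by omega, ?_⟩
          rw [Finset.sum_range_succ']
          show (∑ i ∈ Finset.range k, Nat.fib (g i)) + Nat.fib (n+2) = c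
          omega
        · have hr : c - Nat.fib (n+3) < Nat.fib (n+2) := by omega
          obtain ⟨k, g, hk, hsum⟩ := ih n (by omega) _ hr
          refine ⟨k+1, fun i => match i with | 0 => n+3 | (j+1) => g j, by omega, ?_⟩
          rw [Finset.sum_range_succ']
          show (∑ i ∈ Finset.range k, Nat.fib (g i)) + Nat.fib (n+3) = c
          omega

/-- `n ≤ fib (n+2)`. -/
lemma FSaux_le_fib (n : ℕ) : n ≤ Nat.fib (n + 2) := by
  induction n with
  | zero => norm_num
  | succ k ih =>
    have h1 : Nat.fib (k+1+2) = Nat.fib (k+1) + Nat.fib (k+2) := by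
      rw [show k+1+2 = k+3 by omega, show k+3 = k+1+2 by omega, Nat.fib_add_two,
        show k+1+1 = k+2 by omega]
    have h2 : 0 < Nat.fib (k+1) := Nat.fib_pos.2 (by omega)
    omega

/-- Distinctness of powers below the cardinality of the range. -/
lemma FSaux_pow_inj (p t : ℕ) (ht : (Set.range fun n : ℕ => (2 : ZMod p) ^ n).ncard = t) :
    ∀ i < t, ∀ j < t, (2 : ZMod p) ^ i = (2 : ZMod p) ^ j → i = j := by
  have key : ∀ i j : ℕ, i < j → (2 : ZMod p) ^ i = (2 : ZMod p) ^ j → j < t → False := by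
    intro i j hij heq hjt
    have hsub : Set.range (fun n : ℕ => (2 : ZMod p) ^ n) ⊆
        (fun n : ℕ => (2 : ZMod p) ^ n) '' ↑(Finset.range j) := by
      rintro x ⟨n, rfl⟩
      induction n using Nat.strong_induction_on with
      | _ n ihn =>
        rcases Nat.lt_or_ge n j with h | h
        · exact ⟨n, Finset.mem_coe.2 (Finset.mem_range.2 h), rfl⟩
        · have hlt : i + (n - j) < n := by omega
          have hmem := ihn _ hlt
          have hEq : (2 : ZMod p) ^ n = (2 : ZMod p) ^ (i + (n - j)) := by
            have e1 : (2 : ZMod p) ^ n = 2 ^ j * 2 ^ (n - j) := by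
              rw [← pow_add]; congr 1; omega
            rw [e1, ← heq, ← pow_add]
          show (2 : ZMod p) ^ n ∈ _
          rw [hEq]
          exact hmem
    have h1 : (Set.range fun n : ℕ => (2 : ZMod p) ^ n).ncard ≤ j := by
      calc (Set.range fun n : ℕ => (2 : ZMod p) ^ n).ncard
          ≤ ((fun n : ℕ => (2 : ZMod p) ^ n) '' ↑(Finset.range j)).ncard :=
            Set.ncard_le_ncard hsub ((Finset.range j).finite_toSet.image _)
      _ ≤ (↑(Finset.range j) : Set ℕ).ncard := Set.ncard_image_le (Finset.range j).finite_toSet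
      _ = j := by rw [Set.ncard_coe_finset, Finset.card_range]
    omega
  intro i hi j hj heq
  rcases lt_trichotomy i j with h | h | h
  · exact absurd heq (fun heq => key i j h heq hj)
  · exact h
  · exact absurd heq.symm (fun heq => key j i h heq hi)

/-- If the powers of `2` and the Fibonacci numbers each hit more than `2√p` residues
mod the prime `p`, then every element of `(ℤ/pℤ)²` is a sum of pairwise distinct
elements of `A₁ = {(2ⁿ, F_m)} mod p`. -/
theorem FS_A1_eq_Zp2 (p : ℕ) (hp : p.Prime)
    (h2 : ((Set.range fun n : ℕ => (2 : ZMod p) ^ n).ncard : ℝ) > 2 * Real.sqrt p)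
    (hF : ((Set.range fun n : ℕ => (Nat.fib n : ZMod p)).ncard : ℝ) > 2 * Real.sqrt p) :
    ∀ v : ZMod p × ZMod p, ∃ B : Finset (ZMod p × ZMod p),
      (↑B : Set (ZMod p × ZMod p)) ⊆
        {z | ∃ n m : ℕ, z = ((2 : ZMod p) ^ n, (Nat.fib m : ZMod p))} ∧
      ∑ z ∈ B, z = v := by
  intro v
  haveI : NeZero p := ⟨hp.ne_zero⟩
  set t := (Set.range fun n : ℕ => (2 : ZMod p) ^ n).ncard with htdef
  have hpow := FSaux_pow_inj p t htdef.symm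
  have hp2 : 2 ≤ p := hp.two_le
  -- the binary length L
  set L := Nat.clog 2 p with hLdef
  have hLpos : 1 ≤ L := Nat.clog_pos (by norm_num) hp2
  have hpL : p ≤ 2 ^ L := Nat.le_pow_clog (by norm_num) p
  obtain ⟨b0, hb0⟩ : ∃ b0, L = b0 + 1 := ⟨L - 1, by omega⟩
  have hLp : 2 ^ b0 < p := by
    have := Nat.pow_pred_clog_lt_self (show 1 < 2 by norm_num) hp.one_lt
    rw [← hLdef, hb0] at this
    simpa using this
  -- the Fibonacci index m
  have hex : ∃ n, p ≤ Nat.fib (n + 2) := ⟨p, FSaux_le_fib p⟩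
  set m := Nat.find hex with hmdef
  have hpm : p ≤ Nat.fib (m + 2) := Nat.find_spec hex
  have hfibm1 : Nat.fib (m + 1) < p := by
    rcases Nat.eq_zero_or_pos m with h0 | h0
    · rw [h0]; simpa using hp.one_lt
    · have hmin := Nat.find_min hex (show m - 1 < m by omega)
      rw [show m - 1 + 2 = m + 1 by omega] at hmin
      omega
  set K := (m + 1) / 2 with hKdef
  have hfibK : Nat.fib (2 * K) ≤ Nat.fib (m + 1) := Nat.fib_mono (by omega)
  -- the key counting inequality : K + L ≤ t
  have htKL : K + L ≤ t := by
    have h1 := FSaux_sq_le_fib K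
    have h2' := FSaux_sq_le_pow b0
    have h3 : (K + b0) ^ 2 ≤ 2 * K ^ 2 + 2 * b0 ^ 2 := by
      have : ((K + b0 : ℕ) : ℤ) ^ 2 ≤ 2 * (K : ℤ) ^ 2 + 2 * (b0 : ℤ) ^ 2 := by
        push_cast
        nlinarith [sq_nonneg ((K : ℤ) - (b0 : ℤ))]
      exact_mod_cast this
    have hineq : (K + b0) ^ 2 ≤ 4 * p := by omega
    have hcast : ((K + b0 : ℕ) : ℝ) ≤ 2 * Real.sqrt p := by
      have h4p : ((K + b0 : ℕ) : ℝ) ^ 2 ≤ ((4 * p : ℕ) : ℝ) := by exact_mod_cast hineq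
      have he : ((K + b0 : ℕ) : ℝ) = Real.sqrt (((K + b0 : ℕ) : ℝ) ^ 2) :=
        (Real.sqrt_sq (by positivity)).symm
      rw [he]
      calc Real.sqrt (((K + b0 : ℕ) : ℝ) ^ 2) ≤ Real.sqrt ((4 * p : ℕ) : ℝ) :=
            Real.sqrt_le_sqrt h4p
        _ = 2 * Real.sqrt p := by
            push_cast
            rw [show ((4 : ℝ) * p) = 2 ^ 2 * p by ring, Real.sqrt_mul (by positivity) _,
              Real.sqrt_sq (by norm_num)]
    have hlt : ((K + b0 : ℕ) : ℝ) < (t : ℝ) := lt_of_le_of_lt hcast h2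
    have := Nat.cast_lt.mp hlt
    omega
  -- Fibonacci representation of the second coordinate
  have hbval : (v.2).val < p := ZMod.val_lt v.2
  obtain ⟨k, g, hkK, hgsum⟩ := FSaux_fibrep m (v.2).val (lt_of_lt_of_le hbval hpm)
  have hkt : k + L ≤ t := by omega
  -- binary representation of the residual first coordinate
  set S1 : ZMod p := ∑ i ∈ Finset.range k, (2 : ZMod p) ^ (t - 1 - i) with hS1
  set c : ZMod p := v.1 - S1 with hc
  have hcval : c.val < 2 ^ L := lt_of_lt_of_le (ZMod.val_lt c) hpL
  obtain ⟨E, hE, hEsum⟩ := FSaux_binary L c.val hcval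
  refine ⟨(Finset.range k).image
      (fun i => ((2 : ZMod p) ^ (t - 1 - i), (Nat.fib (g i) : ZMod p))) ∪
      E.image (fun e => ((2 : ZMod p) ^ e, (0 : ZMod p))), ?_, ?_⟩
  · intro z hz
    simp only [Finset.coe_union, Set.mem_union, Finset.coe_image, Set.mem_image,
      Finset.mem_coe, Finset.mem_range] at hz
    rcases hz with ⟨i, hi, rfl⟩ | ⟨e, he, rfl⟩
    · exact ⟨t - 1 - i, g i, rfl⟩
    · exact ⟨e, 0, by simp⟩
  · have hinj1 : ∀ x ∈ Finset.range k, ∀ y ∈ Finset.range k,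
        (fun i => ((2 : ZMod p) ^ (t - 1 - i), (Nat.fib (g i) : ZMod p))) x =
        (fun i => ((2 : ZMod p) ^ (t - 1 - i), (Nat.fib (g i) : ZMod p))) y → x = y := by
      intro i hi j hj hEq
      have hi' := Finset.mem_range.1 hi
      have hj' := Finset.mem_range.1 hj
      have h1 := congrArg Prod.fst hEq
      simp only at h1
      have := hpow _ (by omega) _ (by omega) h1
      omega
    have hinj2 : ∀ x ∈ E, ∀ y ∈ E,
        (fun e => ((2 : ZMod p) ^ e, (0 : ZMod p))) x =
        (fun e => ((2 : ZMod p) ^ e, (0 : ZMod p))) y → x = y := by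
      intro e he e' he' hEq
      have he1 := Finset.mem_range.1 (hE he)
      have he2 := Finset.mem_range.1 (hE he')
      have h1 := congrArg Prod.fst hEq
      simp only at h1
      exact hpow _ (by omega) _ (by omega) h1
    have hdisj : Disjoint ((Finset.range k).image
        (fun i => ((2 : ZMod p) ^ (t - 1 - i), (Nat.fib (g i) : ZMod p))))
        (E.image (fun e => ((2 : ZMod p) ^ e, (0 : ZMod p)))) := by
      rw [Finset.disjoint_left]
      rintro z hz1 hz2
      obtain ⟨i, hi, rfl⟩ := Finset.mem_image.1 hz1
      obtain ⟨e, he, hEq⟩ := Finset.mem_image.1 hz2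
      have hi' := Finset.mem_range.1 hi
      have he' := Finset.mem_range.1 (hE he)
      have h1 := congrArg Prod.fst hEq
      simp only at h1
      have := hpow _ (by omega) _ (by omega) h1.symm
      omega
    rw [Finset.sum_union hdisj, Finset.sum_image hinj1, Finset.sum_image hinj2]
    have hfst1 : (∑ i ∈ Finset.range k,
        ((2 : ZMod p) ^ (t - 1 - i), (Nat.fib (g i) : ZMod p))) =
        (S1, (v.2.val : ZMod p)) := by
      rw [Prod.ext_iff]
      constructor
      · rw [Prod.fst_sum]
      · rw [Prod.snd_sum]
        rw [← Nat.cast_sum, hgsum]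
    have hfst2 : (∑ e ∈ E, ((2 : ZMod p) ^ e, (0 : ZMod p))) = (c, 0) := by
      rw [Prod.ext_iff]
      constructor
      · rw [Prod.fst_sum]
        have : ∑ e ∈ E, (2 : ZMod p) ^ e = ((∑ e ∈ E, 2 ^ e : ℕ) : ZMod p) := by
          push_cast
          rfl
        rw [this, hEsum, ZMod.natCast_rightInverse c]
      · rw [Prod.snd_sum]
        simp
    rw [hfst1, hfst2, Prod.mk_add_mk]
    have hv2 : ((v.2.val : ℕ) : ZMod p) = v.2 := ZMod.natCast_rightInverse v.2
    rw [hv2, hc, show S1 + (v.1 - S1) = v.1 by ring, add_zero]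
end

section
/- Let p be a prime such that the set {2^n mod p : n ≥ 0} has cardinality greater than 2√p. Then FS(A_2 mod p) = Z_p^2, where A_2 = {(2^n, 2^m) : n, m ≥ 0} reduced modulo p. -/
/-- Every natural `n < 2^d` is the sum of distinct powers of two with exponents `< d`. -/
lemma FS_binary_rep : ∀ d n : ℕ, n < 2 ^ d → ∃ s : Finset ℕ, (∀ i ∈ s, i < d) ∧ ∑ i ∈ s, 2 ^ i = n := by
  intro d
  induction d with
  | zero =>
    intro n hn
    interval_cases n
    exact ⟨∅, by simp, by simp⟩
  | succ d ih =>
    intro n hn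
    by_cases h : n < 2 ^ d
    · obtain ⟨s, hs, hsum⟩ := ih n h
      exact ⟨s, fun i hi => (hs i hi).trans (Nat.lt_succ_self d), hsum⟩
    · push_neg at h
      have h2 : 2 ^ (d + 1) = 2 ^ d + 2 ^ d := by ring
      obtain ⟨s, hs, hsum⟩ := ih (n - 2 ^ d) (by omega)
      have hd : d ∉ s := fun hd => absurd (hs d hd) (lt_irrefl d)
      refine ⟨insert d s, ?_, ?_⟩
      · intro i hi
        rcases Finset.mem_insert.1 hi with rfl | hi
        · exact Nat.lt_succ_self _
        · exact (hs i hi).trans (Nat.lt_succ_self _)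
      · rw [Finset.sum_insert hd, hsum]; omega

lemma FS_sq_lt_pow : ∀ d : ℕ, d * d < 4 * 2 ^ d := by
  intro d
  induction d with
  | zero => norm_num
  | succ d ih =>
    have h2 : d < 2 ^ d := Nat.lt_two_pow_self
    have h1 : 1 ≤ 2 ^ d := Nat.one_le_two_pow
    have : 2 ^ (d + 1) = 2 * 2 ^ d := by ring
    nlinarith

/-- Padding a multiset representation by splitting `2^a = 2^(a-1) + 2^(a-1)`. -/
lemma FS_pad {p d : ℕ} (hd : 0 < d) (h1 : (2 : ZMod p) ^ d = 1) :
    ∀ (j : ℕ) (M : Multiset ℕ), M ≠ 0 →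
      ∃ M' : Multiset ℕ, M' ≠ 0 ∧ Multiset.card M' = Multiset.card M + j ∧
        (M'.map fun e => (2 : ZMod p) ^ e).sum = (M.map fun e => (2 : ZMod p) ^ e).sum := by
  intro j
  induction j with
  | zero => intro M hM; exact ⟨M, hM, rfl, rfl⟩
  | succ j ih =>
    intro M hM
    obtain ⟨M', hM', hcard, hsum⟩ := ih M hM
    obtain ⟨a, ha⟩ := Multiset.exists_mem_of_ne_zero hM'
    set a' : ℕ := if a = 0 then d else a with ha'
    have ha'pos : 0 < a' := by
      rcases eq_or_ne a 0 with h | h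
      · simpa [ha', h] using hd
      · simpa [ha', h] using Nat.pos_of_ne_zero h
    have hpow : (2 : ZMod p) ^ a' = (2 : ZMod p) ^ a := by
      rcases eq_or_ne a 0 with h | h
      · simp [ha', h, h1]
      · simp [ha', h]
    obtain ⟨b, hb⟩ : ∃ b, a' = b + 1 := ⟨a' - 1, by omega⟩
    have hsplit : (2 : ZMod p) ^ (a' - 1) + (2 : ZMod p) ^ (a' - 1) = (2 : ZMod p) ^ a := by
      rw [← hpow, hb]
      simp [pow_succ, mul_two]
    have hM'eq : a ::ₘ M'.erase a = M' := Multiset.cons_erase ha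
    refine ⟨(a' - 1) ::ₘ (a' - 1) ::ₘ M'.erase a, by simp, ?_, ?_⟩
    · have h0 : 0 < Multiset.card M' := Multiset.card_pos.2 hM'
      simp only [Multiset.card_cons, Multiset.card_erase_of_mem ha, Nat.pred_eq_sub_one]
      omega
    · rw [← hsum, ← hM'eq]
      simp only [Multiset.map_cons, Multiset.sum_cons, ← add_assoc, hsplit,
        Multiset.erase_cons_head]

/-- Pair a distinct representation of the first coordinate with an arbitrary multiset
representation of the second coordinate. -/
lemma FS_pairing {p d : ℕ}
    (hinj : ∀ i < d, ∀ j < d, (2 : ZMod p) ^ i = (2 : ZMod p) ^ j → i = j)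
    (s : Finset ℕ) (hs : ∀ i ∈ s, i < d) (M : Multiset ℕ) (hcard : Multiset.card M = s.card) :
    ∃ B : Finset (ZMod p × ZMod p),
      (↑B : Set (ZMod p × ZMod p)) ⊆
        {z | ∃ n m : ℕ, z = ((2 : ZMod p) ^ n, (2 : ZMod p) ^ m)} ∧
      ∑ z ∈ B, z = (∑ i ∈ s, (2 : ZMod p) ^ i, (M.map fun e => (2 : ZMod p) ^ e).sum) := by
  classical
  set e1 : List ℕ := s.toList with he1
  set e2 : List ℕ := M.toList with he2
  have hlen : e1.length = e2.length := by
    rw [he1, he2, Finset.length_toList, Multiset.length_toList, hcard]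
  set zipped : List (ZMod p × ZMod p) :=
    (e1.zip e2).map (fun q => ((2 : ZMod p) ^ q.1, (2 : ZMod p) ^ q.2)) with hz
  have hfst : zipped.map Prod.fst = e1.map fun i => (2 : ZMod p) ^ i := by
    rw [hz, List.map_map]
    have h : (Prod.fst ∘ fun q : ℕ × ℕ => ((2 : ZMod p) ^ q.1, (2 : ZMod p) ^ q.2)) =
        (fun i => (2 : ZMod p) ^ i) ∘ Prod.fst := rfl
    rw [h, ← List.map_map, List.map_fst_zip hlen.le]
  have hsnd : zipped.map Prod.snd = e2.map fun i => (2 : ZMod p) ^ i := by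
    rw [hz, List.map_map]
    have h : (Prod.snd ∘ fun q : ℕ × ℕ => ((2 : ZMod p) ^ q.1, (2 : ZMod p) ^ q.2)) =
        (fun i => (2 : ZMod p) ^ i) ∘ Prod.snd := rfl
    rw [h, ← List.map_map, List.map_snd_zip hlen.ge]
  have hnodup1 : (e1.map fun i => (2 : ZMod p) ^ i).Nodup := by
    refine List.Nodup.map_on ?_ (Finset.nodup_toList s)
    intro x hx y hy hxy
    have hx' : x ∈ s := by rwa [← Finset.mem_toList]
    have hy' : y ∈ s := by rwa [← Finset.mem_toList]
    exact hinj x (hs x hx') y (hs y hy') hxy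
  have hnodup : zipped.Nodup := List.Nodup.of_map Prod.fst (hfst ▸ hnodup1)
  refine ⟨⟨(↑zipped : Multiset (ZMod p × ZMod p)), Multiset.coe_nodup.mpr hnodup⟩, ?_, ?_⟩
  · intro z hz'
    simp only [Finset.mem_coe, Finset.mem_mk, Multiset.mem_coe] at hz'
    obtain ⟨q, _, rfl⟩ := List.mem_map.1 hz'
    exact ⟨q.1, q.2, rfl⟩
  · have hsum : ∑ z ∈ (⟨(↑zipped : Multiset (ZMod p × ZMod p)),
        Multiset.coe_nodup.mpr hnodup⟩ : Finset (ZMod p × ZMod p)), z = zipped.sum := by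
      rw [Finset.sum_eq_multiset_sum]
      simp [Multiset.map_id']
    rw [hsum]
    refine Prod.ext ?_ ?_
    · have h := map_list_sum (AddMonoidHom.fst (ZMod p) (ZMod p)) zipped
      simp only [AddMonoidHom.coe_fst] at h
      rw [h, hfst]
      have h2 : ∑ i ∈ s, (2 : ZMod p) ^ i =
          (Multiset.map (fun i => (2 : ZMod p) ^ i) s.val).sum := Finset.sum_eq_multiset_sum ..
      rw [h2, ← Finset.coe_toList s, ← he1]
      rfl
    · have h := map_list_sum (AddMonoidHom.snd (ZMod p) (ZMod p)) zipped
      simp only [AddMonoidHom.coe_snd] at h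
      rw [h, hsnd]
      conv_rhs => rw [← Multiset.coe_toList M]
      rfl

/-- If the powers of `2` hit more than `2√p` residues mod the prime `p`, then every
element of `(ℤ/pℤ)²` is a sum of pairwise distinct elements of `A₂ = {(2ⁿ, 2ᵐ)} mod p`. -/
theorem FS_A2_eq_Zp2 (p : ℕ) (hp : p.Prime)
    (h2 : ((Set.range fun n : ℕ => (2 : ZMod p) ^ n).ncard : ℝ) > 2 * Real.sqrt p) :
    ∀ v : ZMod p × ZMod p, ∃ B : Finset (ZMod p × ZMod p),
      (↑B : Set (ZMod p × ZMod p)) ⊆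
        {z | ∃ n m : ℕ, z = ((2 : ZMod p) ^ n, (2 : ZMod p) ^ m)} ∧
      ∑ z ∈ B, z = v := by
  classical
  haveI : Fact p.Prime := ⟨hp⟩
  intro v
  have hp2 : p ≠ 2 := by
    rintro rfl
    have hle : ((Set.range fun n : ℕ => (2 : ZMod 2) ^ n).ncard : ℝ) ≤ 2 := by
      have h := Set.ncard_le_ncard (Set.subset_univ (Set.range fun n : ℕ => (2 : ZMod 2) ^ n))
        Set.finite_univ
      rw [Set.ncard_univ] at h
      have hc : Nat.card (ZMod 2) = 2 := by simp
      rw [hc] at h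
      exact_mod_cast h
    have hs : (1 : ℝ) < Real.sqrt 2 := by
      rw [show (1 : ℝ) = Real.sqrt 1 by simp]
      exact Real.sqrt_lt_sqrt (by norm_num) (by norm_num)
    push_cast at h2
    nlinarith
  have h20 : (2 : ZMod p) ≠ 0 := by
    intro h
    have h' : ((2 : ℕ) : ZMod p) = 0 := by push_cast; exact h
    rw [ZMod.natCast_eq_zero_iff] at h'
    exact hp2 ((Nat.prime_dvd_prime_iff_eq hp Nat.prime_two).1 h')
  obtain ⟨u, hu⟩ := isUnit_iff_ne_zero.2 h20
  set d := orderOf u with hdd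
  have hd : 0 < d := orderOf_pos u
  have hpow_eq : ∀ n, (2 : ZMod p) ^ n = ((u ^ n : (ZMod p)ˣ) : ZMod p) := by
    intro n; rw [← hu]; push_cast; rfl
  have h1 : (2 : ZMod p) ^ d = 1 := by
    rw [hpow_eq, pow_orderOf_eq_one]; rfl
  have hinj : ∀ i < d, ∀ j < d, (2 : ZMod p) ^ i = (2 : ZMod p) ^ j → i = j := by
    intro i hi j hj hij
    refine pow_injOn_Iio_orderOf (x := u) hi hj (Units.ext ?_)
    rw [← hpow_eq, ← hpow_eq]; exact hij
  -- the number of powers is at most `d`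
  have hncard : (Set.range fun n : ℕ => (2 : ZMod p) ^ n).ncard ≤ d := by
    have hsub : (Set.range fun n : ℕ => (2 : ZMod p) ^ n) ⊆
        ↑((Finset.range d).image fun i => (2 : ZMod p) ^ i) := by
      rintro x ⟨n, rfl⟩
      simp only [Finset.coe_image, Set.mem_image, Finset.mem_coe, Finset.mem_range]
      refine ⟨n % d, Nat.mod_lt _ hd, ?_⟩
      rw [hpow_eq, hpow_eq, pow_mod_orderOf]
    calc (Set.range fun n : ℕ => (2 : ZMod p) ^ n).ncard
        ≤ ((Finset.range d).image fun i => (2 : ZMod p) ^ i : Finset (ZMod p)).card := by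
          rw [← Set.ncard_coe_finset]
          exact Set.ncard_le_ncard hsub (Finset.finite_toSet _)
      _ ≤ (Finset.range d).card := Finset.card_image_le
      _ = d := Finset.card_range d
  -- `4p < d²`
  have hd2 : 4 * p < d * d := by
    have hdr : 2 * Real.sqrt p < (d : ℝ) := by
      calc 2 * Real.sqrt p < ((Set.range fun n : ℕ => (2 : ZMod p) ^ n).ncard : ℝ) := h2
        _ ≤ (d : ℝ) := by exact_mod_cast hncard
    have hpn : (0 : ℝ) ≤ (p : ℝ) := by positivity
    have hsq : Real.sqrt p * Real.sqrt p = (p : ℝ) := Real.mul_self_sqrt hpn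
    have : (4 : ℝ) * p < (d : ℝ) * d := by nlinarith [Real.sqrt_nonneg (p : ℝ)]
    exact_mod_cast this
  have hplt : p < 2 ^ d := by
    have := FS_sq_lt_pow d
    omega
  -- every residue is a sum of distinct powers of two with exponents `< d`
  have rep : ∀ t : ZMod p, ∃ s : Finset ℕ, s.Nonempty ∧ (∀ i ∈ s, i < d) ∧
      ∑ i ∈ s, (2 : ZMod p) ^ i = t := by
    intro t
    set n : ℕ := if t = 0 then p else t.val with hn
    have hn0 : n ≠ 0 := by
      rcases eq_or_ne t 0 with h | h
      · simpa [hn, h] using hp.pos.ne'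
      · simp only [hn, h, if_false]
        exact fun h0 => h ((ZMod.val_eq_zero t).1 h0)
    have hnlt : n < 2 ^ d := by
      rcases eq_or_ne t 0 with h | h
      · simpa [hn, h] using hplt
      · simp only [hn, h, if_false]
        exact lt_trans (ZMod.val_lt t) hplt
    have hcast : ((n : ℕ) : ZMod p) = t := by
      rcases eq_or_ne t 0 with h | h
      · simp [hn, h]
      · simp [hn, h, ZMod.natCast_val, ZMod.cast_id]
    obtain ⟨s, hs, hsum⟩ := FS_binary_rep d n hnlt
    refine ⟨s, ?_, hs, ?_⟩
    · rw [Finset.nonempty_iff_ne_empty]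
      rintro rfl
      simp at hsum
      exact hn0 hsum.symm
    · calc ∑ i ∈ s, (2 : ZMod p) ^ i = ((∑ i ∈ s, 2 ^ i : ℕ) : ZMod p) := by push_cast; rfl
        _ = t := by rw [hsum, hcast]
  obtain ⟨s1, hs1ne, hs1lt, hs1sum⟩ := rep v.1
  obtain ⟨s2, hs2ne, hs2lt, hs2sum⟩ := rep v.2
  have hval : ∀ (s : Finset ℕ), ∑ i ∈ s, (2 : ZMod p) ^ i =
      (s.val.map fun e => (2 : ZMod p) ^ e).sum := fun s => Finset.sum_eq_multiset_sum ..
  rcases le_total s2.card s1.card with hle | hle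
  · obtain ⟨M, _, hMcard, hMsum⟩ := FS_pad hd h1 (s1.card - s2.card) s2.val
      (by simpa using Finset.nonempty_iff_ne_empty.1 hs2ne)
    obtain ⟨B, hB1, hB2⟩ := FS_pairing hinj s1 hs1lt M
      (by rw [hMcard]; simp only [Finset.card_def] at *; omega)
    refine ⟨B, hB1, ?_⟩
    rw [hB2, hMsum, ← hval, hs1sum, hs2sum]
  · obtain ⟨M, _, hMcard, hMsum⟩ := FS_pad hd h1 (s2.card - s1.card) s1.val
      (by simpa using Finset.nonempty_iff_ne_empty.1 hs1ne)
    obtain ⟨B, hB1, hB2⟩ := FS_pairing hinj s2 hs2lt M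
      (by rw [hMcard]; simp only [Finset.card_def] at *; omega)
    refine ⟨B.image Prod.swap, ?_, ?_⟩
    · intro z hz
      simp only [Finset.coe_image, Set.mem_image, Finset.mem_coe] at hz
      obtain ⟨w, hw, rfl⟩ := hz
      obtain ⟨n, m, rfl⟩ := hB1 hw
      exact ⟨m, n, rfl⟩
    · rw [Finset.sum_image (fun x _ y _ h => Prod.swap_injective h)]
      have hswap : ∑ z ∈ B, z.swap = (∑ z ∈ B, z).swap := by
        refine Prod.ext ?_ ?_ <;> simp [Prod.fst_sum, Prod.snd_sum]
      rw [hswap, hB2, hMsum, ← hval, hs1sum, hs2sum]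
      rfl
end

section
/- Let p be a prime such that the set {F_n mod p : n ≥ 0} of Fibonacci residues has cardinality greater than 2√p. Then FS(A_3 mod p) = Z_p^2, where A_3 = {(F_n, F_m) : n, m ≥ 0} reduced modulo p. -/
open Finset Pointwise

private def iterSum {p : ℕ} (T : Finset (ZMod p)) : ℕ → Finset (ZMod p)
  | 0 => {0}
  | n + 1 => iterSum T n + T

private lemma iterSum_nonempty {p : ℕ} (T : Finset (ZMod p)) (hT : T.Nonempty) :
    ∀ n, (iterSum T n).Nonempty
  | 0 => ⟨0, by simp [iterSum]⟩
  | n + 1 => by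
    obtain ⟨a, ha⟩ := iterSum_nonempty T hT n
    obtain ⟨b, hb⟩ := hT
    exact ⟨a + b, Finset.add_mem_add ha hb⟩

private lemma iterSum_card {p : ℕ} (hp : p.Prime) (T : Finset (ZMod p)) (hT : T.Nonempty) :
    ∀ n, min p (n * (T.card - 1) + 1) ≤ (iterSum T n).card := by
  intro n
  induction n with
  | zero => simpa [iterSum] using min_le_right p 1
  | succ n ih =>
    have ht1 : 1 ≤ T.card := Finset.card_pos.mpr hT
    have h := ZMod.cauchy_davenport hp (iterSum_nonempty T hT n) hT
    have hstep : (iterSum T (n + 1)) = iterSum T n + T := rfl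
    rw [hstep]
    rcases le_or_gt p (n * (T.card - 1) + 1) with hc | hc
    · have hcard : p ≤ (iterSum T n).card := by
        rw [min_eq_left hc] at ih; exact ih
      have : p ≤ (iterSum T n).card + T.card - 1 := by omega
      calc min p ((n+1) * (T.card - 1) + 1) ≤ p := min_le_left _ _
        _ = min p ((iterSum T n).card + T.card - 1) := (min_eq_left this).symm
        _ ≤ _ := h
    · have hcard : n * (T.card - 1) + 1 ≤ (iterSum T n).card := by
        have := min_eq_right (le_of_lt hc) ▸ ih
        omega
      have key : (n + 1) * (T.card - 1) + 1 ≤ (iterSum T n).card + T.card - 1 := by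
        have : (n + 1) * (T.card - 1) = n * (T.card - 1) + (T.card - 1) := by ring
        omega
      calc min p ((n+1) * (T.card - 1) + 1)
          ≤ min p ((iterSum T n).card + T.card - 1) := by
            exact min_le_min le_rfl key
        _ ≤ _ := h

private lemma iterSum_mem {p : ℕ} (T : Finset (ZMod p)) :
    ∀ n, ∀ c ∈ iterSum T n, ∃ f : Fin n → ZMod p, (∀ i, f i ∈ T) ∧ ∑ i, f i = c
  | 0 => by
    intro c hc
    simp only [iterSum, Finset.mem_singleton] at hc
    subst hc
    exact ⟨fun i => i.elim0, fun i => i.elim0, by simp⟩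
  | n + 1 => by
    intro c hc
    have hstep : (iterSum T (n + 1)) = iterSum T n + T := rfl
    rw [hstep, Finset.mem_add] at hc
    obtain ⟨x, hx, y, hy, hxy⟩ := hc
    obtain ⟨f, hf, hsum⟩ := iterSum_mem T n x hx
    refine ⟨Fin.cons y f, ?_, ?_⟩
    · intro i
      refine Fin.cases ?_ ?_ i
      · simpa using hy
      · intro j; simpa using hf j
    · rw [Fin.sum_cons, hsum, add_comm]; exact hxy

/-- Any `c` is a sum of exactly `k` elements of `T ⊆ ZMod p` when `k*(|T|-1)+1 ≥ p`. -/
private lemma rep {p : ℕ} (hp : p.Prime) (T : Finset (ZMod p)) (hT : T.Nonempty)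
    (k : ℕ) (hk : p ≤ k * (T.card - 1) + 1) (c : ZMod p) :
    ∃ f : Fin k → ZMod p, (∀ i, f i ∈ T) ∧ ∑ i, f i = c := by
  haveI : NeZero p := ⟨hp.ne_zero⟩
  have h1 : p ≤ (iterSum T k).card := by
    have := iterSum_card hp T hT k
    rwa [min_eq_left hk] at this
  have h2 : (iterSum T k).card ≤ p := by
    calc (iterSum T k).card ≤ Fintype.card (ZMod p) := Finset.card_le_univ _
      _ = p := ZMod.card p
  have h3 : iterSum T k = Finset.univ :=
    Finset.eq_univ_of_card _ (le_antisymm h2 h1 |>.trans (ZMod.card p).symm)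
  exact iterSum_mem T k c (h3 ▸ Finset.mem_univ c)

/-- If the Fibonacci numbers hit more than `2√p` residues mod the prime `p`, then every
element of `(ℤ/pℤ)²` is a sum of pairwise distinct elements of `A₃ = {(F_n, F_m)} mod p`. -/
theorem FS_A3_eq_Zp2 (p : ℕ) (hp : p.Prime)
    (hF : ((Set.range fun n : ℕ => (Nat.fib n : ZMod p)).ncard : ℝ) > 2 * Real.sqrt p) :
    ∀ v : ZMod p × ZMod p, ∃ B : Finset (ZMod p × ZMod p),
      (↑B : Set (ZMod p × ZMod p)) ⊆
        {z | ∃ n m : ℕ, z = ((Nat.fib n : ZMod p), (Nat.fib m : ZMod p))} ∧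
      ∑ z ∈ B, z = v := by
  haveI : NeZero p := ⟨hp.ne_zero⟩
  rintro ⟨a, b⟩
  set Sset : Set (ZMod p) := Set.range fun n : ℕ => (Nat.fib n : ZMod p) with hSset
  have hfin : Sset.Finite := Set.toFinite _
  set S : Finset (ZMod p) := hfin.toFinset with hSdef
  have hmemS : ∀ x, x ∈ S ↔ ∃ n : ℕ, (Nat.fib n : ZMod p) = x := by
    intro x
    rw [hSdef, Set.Finite.mem_toFinset]
    exact Set.mem_range
  have hScard : Sset.ncard = S.card := Set.ncard_eq_toFinset_card _ hfin
  set k : ℕ := S.card with hkdef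
  -- numeric facts
  have hkk : 4 * p + 1 ≤ k * k := by
    have h0 : (0:ℝ) ≤ (p:ℝ) := by positivity
    have hs : Real.sqrt p * Real.sqrt p = p := Real.mul_self_sqrt h0
    have hF' : (k : ℝ) > 2 * Real.sqrt p := by rwa [hScard, hkdef] at hF
    have : (4:ℝ) * p < (k:ℝ) * k := by nlinarith [Real.sqrt_nonneg (p:ℝ)]
    have : (4 * p : ℕ) < (k * k : ℕ) := by exact_mod_cast this
    omega
  have hkp : k ≤ p := by
    calc k ≤ Fintype.card (ZMod p) := Finset.card_le_univ _
      _ = p := ZMod.card p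
  have hp2 : 2 ≤ p := hp.two_le
  have hk4 : 4 ≤ k := by
    by_contra h
    push_neg at h
    have h1 : k * k ≤ 3 * 3 := Nat.mul_le_mul (by omega) (by omega)
    have hp2' : p ≤ 2 := by omega
    have hk2 : k ≤ 2 := by omega
    have : k * k ≤ 2 * 2 := Nat.mul_le_mul hk2 hk2
    omega
  set r1 : ℕ := k / 2 with hr1
  -- inequality A : p ≤ r1 * (k-1) + 1
  have needA : p ≤ r1 * (k - 1) + 1 := by
    have h2q : k - 1 ≤ 2 * r1 := by omega
    have hA1 : (k - 1) * (k - 1) ≤ 2 * r1 * (k - 1) := Nat.mul_le_mul_right _ h2q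
    have hsq : (k - 1) * (k - 1) + 2 * (k - 1) + 1 = k * k := by
      have hk1 : k - 1 + 1 = k := by omega
      calc (k - 1) * (k - 1) + 2 * (k - 1) + 1 = ((k-1) + 1) * ((k-1) + 1) := by ring
        _ = k * k := by rw [hk1]
    have h2 : 2 * r1 * (k - 1) = 2 * (r1 * (k - 1)) := by ring
    omega
  -- inequality C : p ≤ k * (k - r1 - 1) + 1
  have needC : p ≤ k * (k - r1 - 1) + 1 := by
    have h2r : k - 2 ≤ 2 * (k - r1 - 1) := by omega
    have hC1 : k * (k - 2) ≤ k * (2 * (k - r1 - 1)) := Nat.mul_le_mul_left _ h2r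
    have hC2 : k * (k - 2) + 2 * k = k * k := by
      have : (k - 2) + 2 = k := by omega
      calc k * (k - 2) + 2 * k = k * ((k - 2) + 2) := by ring
        _ = k * k := by rw [this]
    have hC3 : k * (2 * (k - r1 - 1)) = 2 * (k * (k - r1 - 1)) := by ring
    omega
  have hr1k : r1 + 2 ≤ k := by
    have : 1 ≤ k - r1 - 1 := by
      by_contra h
      push_neg at h
      interval_cases h' : (k - r1 - 1) <;> omega
    omega
  -- the subset W
  obtain ⟨W, hWS, hWcard⟩ := Finset.exists_subset_card_eq (show r1 ≤ S.card by omega)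
  have hSW : (S \ W).card = k - r1 := by rw [Finset.card_sdiff_of_subset hWS, hWcard]
  have hSWne : (S \ W).Nonempty := Finset.card_pos.mp (by omega)
  have hSne : S.Nonempty := ⟨(Nat.fib 0 : ZMod p), (hmemS _).mpr ⟨0, rfl⟩⟩
  -- enumerations
  have eW : Fin r1 ≃ W := (finCongr hWcard.symm).trans W.equivFin.symm
  have eS : Fin k ≃ S := (finCongr hkdef).trans S.equivFin.symm
  set wfun : Fin r1 → ZMod p := fun i => ((eW i : W) : ZMod p) with hwfun
  set zfun : Fin k → ZMod p := fun i => ((eS i : S) : ZMod p) with hzfun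
  have hwinj : Function.Injective wfun := fun i j h =>
    eW.injective (Subtype.val_injective h)
  have hzinj : Function.Injective zfun := fun i j h =>
    eS.injective (Subtype.val_injective h)
  have hwmem : ∀ i, wfun i ∈ W := fun i => (eW i).2
  have hzmem : ∀ i, zfun i ∈ S := fun i => (eS i).2
  set sigW : ZMod p := ∑ i, wfun i with hsigW
  set sigS : ZMod p := ∑ i, zfun i with hsigS
  -- representations
  obtain ⟨f, hfmem, hfsum⟩ := rep hp S hSne r1 (by rwa [← hkdef]) (a - sigS)
  obtain ⟨g, hgmem, hgsum⟩ := rep hp (S \ W) hSWne k (by rw [hSW]; exact needC) (b - sigW)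
  -- the two blocks
  set B1 : Finset (ZMod p × ZMod p) :=
    Finset.image (fun i : Fin r1 => (f i, wfun i)) Finset.univ with hB1
  set B2 : Finset (ZMod p × ZMod p) :=
    Finset.image (fun i : Fin k => (zfun i, g i)) Finset.univ with hB2
  have hB1sum : ∑ z ∈ B1, z = (∑ i, f i, sigW) := by
    rw [hB1, Finset.sum_image (fun i _ j _ h => hwinj (congrArg Prod.snd h))]
    apply Prod.ext
    · rw [Prod.fst_sum]
    · rw [Prod.snd_sum]
  have hB2sum : ∑ z ∈ B2, z = (sigS, ∑ i, g i) := by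
    rw [hB2, Finset.sum_image (fun i _ j _ h => hzinj (congrArg Prod.fst h))]
    apply Prod.ext
    · rw [Prod.fst_sum]
    · rw [Prod.snd_sum]
  have hdisj : Disjoint B1 B2 := by
    rw [Finset.disjoint_left]
    rintro ⟨x, y⟩ h1 h2
    rw [hB1, Finset.mem_image] at h1
    rw [hB2, Finset.mem_image] at h2
    obtain ⟨i, -, hi⟩ := h1
    obtain ⟨j, -, hj⟩ := h2
    have hy1 : y ∈ W := by
      have := congrArg Prod.snd hi; simp at this; rw [← this]; exact hwmem i
    have hy2 : y ∈ S \ W := by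
      have := congrArg Prod.snd hj; simp at this; rw [← this]; exact hgmem j
    exact (Finset.mem_sdiff.mp hy2).2 hy1
  refine ⟨B1 ∪ B2, ?_, ?_⟩
  · rintro ⟨x, y⟩ hz
    simp only [Finset.coe_union, Set.mem_union, Finset.mem_coe] at hz
    have hxy : x ∈ S ∧ y ∈ S := by
      rcases hz with hz | hz
      · rw [hB1, Finset.mem_image] at hz
        obtain ⟨i, -, hi⟩ := hz
        have h1 := congrArg Prod.fst hi
        have h2 := congrArg Prod.snd hi
        simp at h1 h2
        exact ⟨h1 ▸ hfmem i, h2 ▸ hWS (hwmem i)⟩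
      · rw [hB2, Finset.mem_image] at hz
        obtain ⟨i, -, hi⟩ := hz
        have h1 := congrArg Prod.fst hi
        have h2 := congrArg Prod.snd hi
        simp at h1 h2
        exact ⟨h1 ▸ hzmem i, h2 ▸ (Finset.mem_sdiff.mp (hgmem i)).1⟩
    obtain ⟨n, hn⟩ := (hmemS x).mp hxy.1
    obtain ⟨m, hm⟩ := (hmemS y).mp hxy.2
    exact ⟨n, m, by rw [hn, hm]⟩
  · rw [Finset.sum_union hdisj, hB1sum, hB2sum, hfsum, hgsum]
    apply Prod.ext <;> simp
end
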